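/- Assume the groups are sorted so that ρ_1 < ρ_2 < ⋯ < ρ_M. If c* is an optimal pushing strategy with 0 < c*_m < 1 for some index m, then c*_m satisfies the watershed equation at index m, i.e. B ρ_m (∑_{i=1}^m t_i − t_m c*_m) + 1 = exp(B ∑_{j=m+1}^M t_j ρ_j + B t_m ρ_m c*_m). -/

import Mathlib

/-!
Moving only the coordinate `c j` changes the gain at rate `t j * (B ρ_j R E - (1 - E))`, where
`R = ∑ t i (1 - c i)` and `E = exp (-B ∑ t k ρ k c k)`. At an interior coordinate `m` of an
optimum this rate vanishes, so `B ρ_m R E = 1 - E`, and then `R > 0`. Since `ρ` is increasing,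
the rate is positive for `j > m` and negative for `j < m`, which pushes `c j` to `1`,
respectively `0`. For such a step profile `R` and the exponent are explicit, and
`B ρ_m R E = 1 - E` becomes the watershed equation.
-/

open Real Set Function

theorem Finset.sum_apply_update {ι M α : Type*} [Fintype ι] [DecidableEq ι] [AddCommGroup M]
    (f : ι → α → M) (c : ι → α) (j : ι) (x : α) :
    ∑ i, f i (update c j x i) = ∑ i, f i (c i) + (f j x - f j (c j)) := by
  rw [← Finset.add_sum_erase _ _ (Finset.mem_univ j),
    ← Finset.add_sum_erase _ (fun i => f i (c i)) (Finset.mem_univ j), update_self,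
    Finset.sum_congr rfl fun i hi => by rw [update_of_ne (Finset.ne_of_mem_erase hi)]]
  abel

theorem IsMaxOn.comp_update {ι α β : Type*} [DecidableEq ι] [Preorder β] {F : (ι → α) → β}
    {s : ι → Set α} {c : ι → α} (hF : IsMaxOn F (univ.pi s) c) (hc : c ∈ univ.pi s) (j : ι) :
    IsMaxOn (fun x => F (update c j x)) (s j) (c j) :=
  isMaxOn_iff.2 fun x hx => by
    simpa using isMaxOn_iff.1 hF _ ((update_mem_pi_iff_of_mem hc).2 fun _ => hx)

theorem IsMaxOn.hasDerivAt_nonpos {f : ℝ → ℝ} {a b x f' : ℝ} (h : IsMaxOn f (Icc a b) x)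
    (hax : a ≤ x) (hxb : x < b) (hf : HasDerivAt f f' x) : f' ≤ 0 := by
  have hcone : b - x ∈ posTangentConeAt (Icc a b) x :=
    sub_mem_posTangentConeAt_of_segment_subset
      ((segment_eq_Icc hxb.le).trans_subset (Icc_subset_Icc hax le_rfl))
  have := h.localize.hasFDerivWithinAt_nonpos hf.hasDerivWithinAt.hasFDerivWithinAt hcone
  simp only [ContinuousLinearMap.toSpanSingleton_apply, smul_eq_mul] at this
  exact nonpos_of_mul_nonpos_right this (sub_pos.2 hxb)

theorem IsMaxOn.hasDerivAt_nonneg {f : ℝ → ℝ} {a b x f' : ℝ} (h : IsMaxOn f (Icc a b) x)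
    (hax : a < x) (hxb : x ≤ b) (hf : HasDerivAt f f' x) : 0 ≤ f' := by
  have hcone : a - x ∈ posTangentConeAt (Icc a b) x :=
    sub_mem_posTangentConeAt_of_segment_subset
      ((segment_symm ℝ x a ▸ segment_eq_Icc hax.le).trans_subset (Icc_subset_Icc le_rfl hxb))
  have := h.localize.hasFDerivWithinAt_nonpos hf.hasDerivWithinAt.hasFDerivWithinAt hcone
  simp only [ContinuousLinearMap.toSpanSingleton_apply, smul_eq_mul] at this
  exact nonneg_of_mul_nonpos_right this (sub_neg.2 hax)

theorem add_one_eq_exp_of_mul_exp_neg_eq {a y : ℝ} (h : a * exp (-y) = 1 - exp (-y)) :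
    a + 1 = exp y := by
  rw [exp_neg] at h
  field_simp at h
  linarith

theorem Finset.sum_Iic_add_sum_Ioi {ι : Type*} [Fintype ι] [LinearOrder ι]
    [LocallyFiniteOrderBot ι] [LocallyFiniteOrderTop ι] {M : Type*} [AddCommMonoid M]
    (f : ι → M) (m : ι) :
    ∑ i ∈ Finset.Iic m, f i + ∑ i ∈ Finset.Ioi m, f i = ∑ i, f i := by
  rw [← Finset.sum_add_sum_compl (Finset.Iic m)]
  congr
  ext
  simp

section Gain
variable {ι : Type*} [Fintype ι]

def residualDemand (t c : ι → ℝ) : ℝ := ∑ i, t i * (1 - c i)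

def sharedPush (t ρ c : ι → ℝ) : ℝ := ∑ k, t k * ρ k * c k

noncomputable def offloadingGain (B : ℝ) (t ρ c : ι → ℝ) : ℝ :=
  residualDemand t c * (1 - exp (-B * sharedPush t ρ c))

theorem sharedPush_pos {t ρ c : ι → ℝ} (ht : ∀ i, 0 ≤ t i)
    (hρ : ∀ i, 0 ≤ ρ i) (hc : ∀ i, 0 ≤ c i) {m : ι} (htm : 0 < t m) (hρm : 0 < ρ m)
    (hcm : 0 < c m) : 0 < sharedPush t ρ c :=
  Finset.sum_pos' (fun i _ => mul_nonneg (mul_nonneg (ht i) (hρ i)) (hc i))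
    ⟨m, Finset.mem_univ m, by positivity⟩

variable [DecidableEq ι]

theorem residualDemand_update (t c : ι → ℝ) (j : ι) (x : ℝ) :
    residualDemand t (update c j x) = residualDemand t c + t j * (c j - x) := by
  rw [residualDemand, residualDemand, Finset.sum_apply_update (fun i y => t i * (1 - y))]
  ring

theorem sharedPush_update (t ρ c : ι → ℝ) (j : ι) (x : ℝ) :
    sharedPush t ρ (update c j x) = sharedPush t ρ c + t j * ρ j * (x - c j) := by
  rw [sharedPush, sharedPush, Finset.sum_apply_update (fun i y => t i * ρ i * y)]
  ring

theorem hasDerivAt_offloadingGain_update (B : ℝ) (t ρ c : ι → ℝ) (j : ι) :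
    HasDerivAt (fun x => offloadingGain B t ρ (update c j x))
      (t j * (B * ρ j * residualDemand t c * exp (-B * sharedPush t ρ c) -
        (1 - exp (-B * sharedPush t ρ c)))) (c j) := by
  simp only [offloadingGain, residualDemand_update, sharedPush_update]
  have hR := (((hasDerivAt_id (c j)).const_sub (c j)).const_mul (t j)).const_add
    (residualDemand t c)
  have hE := (((((hasDerivAt_id (c j)).sub_const (c j)).const_mul (t j * ρ j)).const_add
    (sharedPush t ρ c)).const_mul (-B)).exp.const_sub 1
  refine (hR.mul hE).congr_deriv ?_
  simp only [id, sub_self, mul_zero, add_zero]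
  ring

end Gain

section Optimum
variable {ι : Type*} [Fintype ι] [DecidableEq ι] {B : ℝ} {t ρ c : ι → ℝ}

theorem IsMaxOn.offloadingGain_eq_one
    (hopt : IsMaxOn (offloadingGain B t ρ) (univ.pi fun _ => Icc 0 1) c)
    (hc : c ∈ univ.pi fun _ => Icc 0 1) {j : ι} (htj : 0 < t j)
    (h : 1 - exp (-B * sharedPush t ρ c) <
      B * ρ j * residualDemand t c * exp (-B * sharedPush t ρ c)) :
    c j = 1 := by
  by_contra hne
  have hc1 := hc j (mem_univ j)
  have := (hopt.comp_update hc j).hasDerivAt_nonpos hc1.1 (hc1.2.lt_of_ne hne)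
    (hasDerivAt_offloadingGain_update B t ρ c j)
  exact (mul_pos htj (sub_pos.2 h)).not_ge this

theorem IsMaxOn.offloadingGain_eq_zero
    (hopt : IsMaxOn (offloadingGain B t ρ) (univ.pi fun _ => Icc 0 1) c)
    (hc : c ∈ univ.pi fun _ => Icc 0 1) {j : ι} (htj : 0 < t j)
    (h : B * ρ j * residualDemand t c * exp (-B * sharedPush t ρ c) <
      1 - exp (-B * sharedPush t ρ c)) :
    c j = 0 := by
  by_contra hne
  have hc1 := hc j (mem_univ j)
  have := (hopt.comp_update hc j).hasDerivAt_nonneg (hc1.1.lt_of_ne' hne) hc1.2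
    (hasDerivAt_offloadingGain_update B t ρ c j)
  exact (mul_neg_of_pos_of_neg htj (sub_neg.2 h)).not_ge this

theorem IsMaxOn.offloadingGain_stationary
    (hopt : IsMaxOn (offloadingGain B t ρ) (univ.pi fun _ => Icc 0 1) c)
    (hc : c ∈ univ.pi fun _ => Icc 0 1) {m : ι} (htm : t m ≠ 0) (hm : c m ∈ Ioo 0 1) :
    B * ρ m * residualDemand t c * exp (-B * sharedPush t ρ c) =
      1 - exp (-B * sharedPush t ρ c) := by
  have := ((hopt.comp_update hc m).isLocalMax (Icc_mem_nhds hm.1 hm.2)).hasDerivAt_eq_zero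
    (hasDerivAt_offloadingGain_update B t ρ c m)
  exact sub_eq_zero.1 ((mul_eq_zero.1 this).resolve_left htm)

end Optimum

section Step
variable {ι : Type*} [Fintype ι] [LinearOrder ι] {c : ι → ℝ} {m : ι}

def IsStepAt (c : ι → ℝ) (m : ι) : Prop := (∀ j < m, c j = 0) ∧ ∀ j, m < j → c j = 1

theorem IsMaxOn.offloadingGain_isStepAt {B : ℝ} {t ρ : ι → ℝ}
    (hopt : IsMaxOn (offloadingGain B t ρ) (univ.pi fun _ => Icc 0 1) c)
    (hc : c ∈ univ.pi fun _ => Icc 0 1) (hB : 0 < B) (ht : ∀ i, 0 < t i) (hρ : ∀ i, 0 < ρ i)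
    (hsort : StrictMono ρ) (hm : c m ∈ Ioo 0 1) : IsStepAt c m := by
  set R := residualDemand t c
  set E := exp (-B * sharedPush t ρ c)
  have hstat : B * ρ m * R * E = 1 - E := hopt.offloadingGain_stationary hc (ht m).ne' hm
  have hE : E < 1 := by
    rw [exp_lt_one_iff, neg_mul, neg_lt_zero]
    exact mul_pos hB <| sharedPush_pos (fun i => (ht i).le) (fun i => (hρ i).le)
      (fun i => (hc i (mem_univ i)).1) (ht m) (hρ m) hm.1
  have hR : 0 < R := by
    have : 0 < B * ρ m * E := by have := hρ m; positivity
    nlinarith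
  refine ⟨fun j hj => hopt.offloadingGain_eq_zero hc (ht j) ?_,
    fun j hj => hopt.offloadingGain_eq_one hc (ht j) ?_⟩
  all_goals rw [← hstat]; gcongr; exact hsort hj

variable [LocallyFiniteOrderBot ι] [LocallyFiniteOrderTop ι]

theorem IsStepAt.residualDemand_eq (hc : IsStepAt c m) (t : ι → ℝ) :
    residualDemand t c = ∑ i ∈ Finset.Iic m, t i - t m * c m := by
  have hlow : ∑ i ∈ Finset.Iic m, t i * c i = t m * c m :=
    Finset.sum_eq_single_of_mem m (Finset.mem_Iic.2 le_rfl) fun i hi hne => by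
      rw [hc.1 i ((Finset.mem_Iic.1 hi).lt_of_ne hne), mul_zero]
  have hhigh : ∑ i ∈ Finset.Ioi m, t i * (1 - c i) = 0 :=
    Finset.sum_eq_zero fun i hi => by rw [hc.2 i (Finset.mem_Ioi.1 hi), sub_self, mul_zero]
  rw [residualDemand, ← Finset.sum_Iic_add_sum_Ioi _ m, hhigh, add_zero]
  simp only [mul_one_sub, Finset.sum_sub_distrib, hlow]

theorem IsStepAt.sharedPush_eq (hc : IsStepAt c m) (t ρ : ι → ℝ) :
    sharedPush t ρ c = ∑ j ∈ Finset.Ioi m, t j * ρ j + t m * ρ m * c m := by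
  have hlow : ∑ i ∈ Finset.Iic m, t i * ρ i * c i = t m * ρ m * c m :=
    Finset.sum_eq_single_of_mem m (Finset.mem_Iic.2 le_rfl) fun i hi hne => by
      rw [hc.1 i ((Finset.mem_Iic.1 hi).lt_of_ne hne), mul_zero]
  have hhigh : ∑ i ∈ Finset.Ioi m, t i * ρ i * c i = ∑ i ∈ Finset.Ioi m, t i * ρ i :=
    Finset.sum_congr rfl fun i hi => by rw [hc.2 i (Finset.mem_Ioi.1 hi), mul_one]
  rw [sharedPush, ← Finset.sum_Iic_add_sum_Ioi _ m, hlow, hhigh, add_comm]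

end Step

theorem stmt_4_general (M : ℕ) (B : ℝ) (hB : 0 < B)
    (t ρ : Fin M → ℝ) (ht : ∀ i, 0 < t i) (hρ : ∀ i, 0 < ρ i ∧ ρ i ≤ 1)
    (hsort : StrictMono ρ)
    (c : Fin M → ℝ) (hc : ∀ i, 0 ≤ c i ∧ c i ≤ 1)
    (hopt : ∀ d : Fin M → ℝ, (∀ i, 0 ≤ d i ∧ d i ≤ 1) →
      (∑ i, t i * (1 - d i)) * (1 - Real.exp (-B * ∑ k, t k * ρ k * d k)) ≤
      (∑ i, t i * (1 - c i)) * (1 - Real.exp (-B * ∑ k, t k * ρ k * c k)))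
    (m : Fin M) (hm0 : 0 < c m) (hm1 : c m < 1) :
    B * ρ m * ((∑ i ∈ Finset.Iic m, t i) - t m * c m) + 1 =
      Real.exp (B * (∑ j ∈ Finset.Ioi m, t j * ρ j) + B * t m * ρ m * c m) := by
  have hmax : IsMaxOn (offloadingGain B t ρ) (univ.pi fun _ => Icc 0 1) c :=
    fun d hd => hopt d fun i => hd i (mem_univ i)
  have hcube : c ∈ univ.pi fun _ => Icc 0 1 := fun i _ => hc i
  have hstep := hmax.offloadingGain_isStepAt hcube hB ht (fun i => (hρ i).1) hsort ⟨hm0, hm1⟩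
  have hstat := hmax.offloadingGain_stationary hcube (ht m).ne' ⟨hm0, hm1⟩
  rw [neg_mul] at hstat
  rw [← hstep.residualDemand_eq, add_one_eq_exp_of_mul_exp_neg_eq hstat, hstep.sharedPush_eq]
  congr 1
  ring

/-- With groups sorted in strictly increasing order of sharing
probability, if an optimal pushing strategy has `0 < c m < 1`, then `c m` satisfies
the watershed equation at index `m`. -/
theorem stmt_4 (M : ℕ) (hM : 1 ≤ M) (B : ℝ) (hB : 0 < B)
    (t ρ : Fin M → ℝ) (ht : ∀ i, 0 < t i) (hρ : ∀ i, 0 < ρ i ∧ ρ i ≤ 1)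
    (hsort : StrictMono ρ)
    (c : Fin M → ℝ) (hc : ∀ i, 0 ≤ c i ∧ c i ≤ 1)
    (hopt : ∀ d : Fin M → ℝ, (∀ i, 0 ≤ d i ∧ d i ≤ 1) →
      (∑ i, t i * (1 - d i)) * (1 - Real.exp (-B * ∑ k, t k * ρ k * d k)) ≤
      (∑ i, t i * (1 - c i)) * (1 - Real.exp (-B * ∑ k, t k * ρ k * c k)))
    (m : Fin M) (hm0 : 0 < c m) (hm1 : c m < 1) :
    B * ρ m * ((∑ i ∈ Finset.Iic m, t i) - t m * c m) + 1 =
      Real.exp (B * (∑ j ∈ Finset.Ioi m, t j * ρ j) + B * t m * ρ m * c m) :=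
  stmt_4_general M B hB t ρ ht hρ hsort c hc hopt m hm0 hm1
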